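/- Under the conditions of the nonstationary RCA model with E log|φ+b_0| ≥ 0 (so that |X_{k}| → ∞ in probability), for all y > 0: (1/n) Σ_{k=1}^n ( (X_{k−1}b_k + e_k)²/(ω²X_{k−1}² + σ²) − 1 ) → 0 in probability. -/

import Mathlib

/-!
With `h x (u, v) = (x u + v)² / (ω² x² + σ²) - 1`, the summands are `h (X_{k-1}) (b_k, e_k)`.
Since `X_{k-1}` is a function of the innovations before time `k` and `E h x (b_0, e_0) = 0` for
every fixed `x`, they form a martingale difference sequence, dominated uniformly in `x` by the
integrable envelope `Z (u, v) = 1 + 2u²/ω² + 2v²/σ²`. Truncating `h` where the envelope exceeds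
a level `c` and recentring gives bounded, pairwise orthogonal martingale differences, whose
averages tend to `0` by Chebyshev's inequality, plus a remainder whose `L¹` norm is at most twice
the tail `E[Z; Z > c]`, uniformly in `k`, which Markov's inequality controls.
-/

open MeasureTheory ProbabilityTheory Filter Finset Function

lemma abs_avg_add_le (u v : ℕ → ℝ) (n : ℕ) :
    |1 / (n : ℝ) * ∑ k ∈ range n, (u k + v k)|
      ≤ |1 / (n : ℝ) * ∑ k ∈ range n, u k| + 1 / (n : ℝ) * ∑ k ∈ range n, |v k| := by
  rw [sum_add_distrib, mul_add]
  refine (abs_add_le _ _).trans (add_le_add_right ?_ _)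
  rw [abs_mul, abs_of_nonneg (by positivity)]
  exact mul_le_mul_of_nonneg_left (abs_sum_le_sum_abs _ _) (by positivity)

lemma Finset.sum_Icc_one_eq_sum_range {M : Type*} [AddCommMonoid M] (f : ℕ → ℕ → M) (n : ℕ) :
    ∑ k ∈ Icc 1 n, f (k - 1) k = ∑ k ∈ range n, f k (k + 1) := by
  induction n with
  | zero => simp
  | succ n ih => rw [sum_Icc_succ_top (by omega), ih, sum_range_succ]; rfl

section Averages

variable {Ω : Type*} [MeasurableSpace Ω] {μ : Measure Ω}

lemma measureReal_ge_le_integral_div {f : Ω → ℝ} (hf0 : ∀ ω, 0 ≤ f ω) (hf : Integrable f μ)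
    {t : ℝ} (ht : 0 < t) : μ.real {ω | t ≤ f ω} ≤ (∫ ω, f ω ∂μ) / t := by
  rw [le_div_iff₀ ht, mul_comm]
  exact mul_meas_ge_le_integral_of_nonneg (ae_of_all _ hf0) hf t

lemma measureReal_avg_ge_le_of_integral_le {V : ℕ → Ω → ℝ} {ε : ℝ}
    (hV : ∀ k, Integrable (V k) μ) (hVε : ∀ k, ∫ ω, |V k ω| ∂μ ≤ ε) (n : ℕ) {t : ℝ} (ht : 0 < t) :
    μ.real {ω | t ≤ 1 / (n : ℝ) * ∑ k ∈ range n, |V k ω|} ≤ ε / t := by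
  refine (measureReal_ge_le_integral_div (fun ω => by positivity)
    ((integrable_finsetSum _ fun k _ => (hV k).abs).const_mul _) ht).trans ?_
  gcongr
  rw [integral_const_mul, integral_finsetSum _ fun k _ => (hV k).abs]
  calc 1 / (n : ℝ) * ∑ k ∈ range n, ∫ ω, |V k ω| ∂μ ≤ 1 / (n : ℝ) * ∑ _k ∈ range n, ε := by
        gcongr with k; exact hVε k
    _ ≤ ε := by
        rcases n.eq_zero_or_pos with rfl | hn
        · simpa using (integral_nonneg fun ω => abs_nonneg (V 0 ω)).trans (hVε 0)
        · simp [field]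

variable [IsProbabilityMeasure μ]

lemma integrable_sq_sum_and_integral_le_of_orthogonal {D : ℕ → Ω → ℝ} {B : ℝ}
    (hD : ∀ k, Measurable (D k)) (hDB : ∀ k ω, |D k ω| ≤ B)
    (horth : ∀ j k, j < k → ∫ ω, D j ω * D k ω ∂μ = 0) (n : ℕ) :
    Integrable (fun ω => (∑ k ∈ range n, D k ω) ^ 2) μ ∧
      ∫ ω, (∑ k ∈ range n, D k ω) ^ 2 ∂μ ≤ n * B ^ 2 := by
  have hprod_le : ∀ j k ω, |D j ω * D k ω| ≤ B ^ 2 := fun j k ω => by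
    rw [abs_mul, sq]
    exact mul_le_mul (hDB j ω) (hDB k ω) (abs_nonneg _) ((abs_nonneg _).trans (hDB j ω))
  have hint : ∀ j k, Integrable (fun ω => D j ω * D k ω) μ := fun j k =>
    .of_bound ((hD j).mul (hD k)).aestronglyMeasurable _ (ae_of_all _ (hprod_le j k))
  have hoff_diag : ∀ j k, j ≠ k → ∫ ω, D j ω * D k ω ∂μ = 0 := fun j k hjk => by
    rcases hjk.lt_or_gt with h | h
    · exact horth j k h
    · simp_rw [mul_comm (D j _)]; exact horth k j h
  simp_rw [sq, sum_mul_sum]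
  refine ⟨integrable_finsetSum _ fun j _ => integrable_finsetSum _ fun k _ => hint j k, ?_⟩
  calc ∫ ω, ∑ j ∈ range n, ∑ k ∈ range n, D j ω * D k ω ∂μ
      = ∑ j ∈ range n, ∑ k ∈ range n, ∫ ω, D j ω * D k ω ∂μ := by
        rw [integral_finsetSum _ fun j _ => integrable_finsetSum _ fun k _ => hint j k]
        exact sum_congr rfl fun j _ => integral_finsetSum _ fun k _ => hint j k
    _ = ∑ j ∈ range n, ∫ ω, D j ω * D j ω ∂μ :=
        sum_congr rfl fun j hj => sum_eq_single_of_mem j hj fun k _ hkj => hoff_diag j k hkj.symm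
    _ ≤ ∑ _j ∈ range n, B * B := sum_le_sum fun j _ =>
        (integral_mono (hint j j) (integrable_const _) fun ω => (le_abs_self _).trans
          ((hprod_le j j ω).trans_eq (sq B))).trans_eq (by simp)
    _ = n * (B * B) := by simp

lemma measureReal_abs_avg_ge_le_of_orthogonal {D : ℕ → Ω → ℝ} {B : ℝ}
    (hD : ∀ k, Measurable (D k)) (hDB : ∀ k ω, |D k ω| ≤ B)
    (horth : ∀ j k, j < k → ∫ ω, D j ω * D k ω ∂μ = 0) (n : ℕ) {t : ℝ} (ht : 0 < t) :
    μ.real {ω | t ≤ |1 / (n : ℝ) * ∑ k ∈ range n, D k ω|} ≤ B ^ 2 / t ^ 2 / n := by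
  obtain ⟨hint, hle⟩ := integrable_sq_sum_and_integral_le_of_orthogonal (μ := μ) hD hDB horth n
  have hsq : ∀ ω, (1 / (n : ℝ) * ∑ k ∈ range n, D k ω) ^ 2
      = (1 / (n : ℝ)) ^ 2 * (∑ k ∈ range n, D k ω) ^ 2 := fun ω => mul_pow _ _ _
  calc μ.real {ω | t ≤ |1 / (n : ℝ) * ∑ k ∈ range n, D k ω|}
      ≤ μ.real {ω | t ^ 2 ≤ (1 / (n : ℝ)) ^ 2 * (∑ k ∈ range n, D k ω) ^ 2} := by
        refine measureReal_mono (fun ω hω => ?_)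
        show t ^ 2 ≤ _
        rw [← hsq, ← sq_abs (1 / (n : ℝ) * ∑ k ∈ range n, D k ω)]
        exact pow_le_pow_left₀ ht.le hω 2
    _ ≤ (∫ ω, (1 / (n : ℝ)) ^ 2 * (∑ k ∈ range n, D k ω) ^ 2 ∂μ) / t ^ 2 :=
        measureReal_ge_le_integral_div (fun ω => by positivity) (hint.const_mul _) (by positivity)
    _ ≤ (1 / (n : ℝ)) ^ 2 * (n * B ^ 2) / t ^ 2 := by
        rw [integral_const_mul]; gcongr
    _ = B ^ 2 / t ^ 2 / n := by
        rcases n.eq_zero_or_pos with rfl | hn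
        · simp
        · field_simp

theorem tendstoInMeasure_avg_zero_of_forall_approx {Y : ℕ → Ω → ℝ}
    (hY : ∀ ε > 0, ∃ (D V : ℕ → Ω → ℝ) (B : ℝ), (∀ k, Y k = D k + V k) ∧
      (∀ k, Measurable (D k)) ∧ (∀ k ω, |D k ω| ≤ B) ∧
      (∀ j k, j < k → ∫ ω, D j ω * D k ω ∂μ = 0) ∧
      (∀ k, Integrable (V k) μ) ∧ ∀ k, ∫ ω, |V k ω| ∂μ ≤ ε) :
    TendstoInMeasure μ (fun (n : ℕ) ω => 1 / (n : ℝ) * ∑ k ∈ range n, Y k ω) atTop 0 := by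
  rw [tendstoInMeasure_iff_measureReal_norm]
  intro δ hδ
  simp only [Pi.zero_apply, sub_zero, Real.norm_eq_abs]
  refine tendsto_order.2 ⟨fun a ha => .of_forall fun n => ha.trans_le measureReal_nonneg,
    fun a ha => ?_⟩
  obtain ⟨D, V, B, hYDV, hD, hDB, horth, hV, hVε⟩ := hY (δ * a / 4) (by positivity)
  filter_upwards [(tendsto_const_div_atTop_nhds_zero_nat (B ^ 2 / (δ / 2) ^ 2)).eventually
    (gt_mem_nhds (half_pos ha))] with n hn
  have hsplit : {ω | δ ≤ |1 / (n : ℝ) * ∑ k ∈ range n, Y k ω|}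
      ⊆ {ω | δ / 2 ≤ |1 / (n : ℝ) * ∑ k ∈ range n, D k ω|}
        ∪ {ω | δ / 2 ≤ 1 / (n : ℝ) * ∑ k ∈ range n, |V k ω|} := fun ω hω => by
    by_contra hcon
    simp only [Set.mem_union, Set.mem_ofPred_eq, not_or, not_le] at hω hcon
    have := abs_avg_add_le (D · ω) (V · ω) n
    simp only [hYDV, Pi.add_apply] at hω
    linarith
  calc _ ≤ _ := (measureReal_mono hsplit).trans (measureReal_union_le _ _)
    _ ≤ B ^ 2 / (δ / 2) ^ 2 / n + δ * a / 4 / (δ / 2) := add_le_add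
        (measureReal_abs_avg_ge_le_of_orthogonal hD hDB horth n (half_pos hδ))
        (measureReal_avg_ge_le_of_integral_le hV hVε n (half_pos hδ))
    _ < a := by
        have : δ * a / 4 / (δ / 2) = a / 2 := by field_simp; ring
        linarith

end Averages

section Truncation

variable {α β : Type*} [MeasurableSpace α] [MeasurableSpace β] {ν : Measure β}

lemma MeasureTheory.Integrable.exists_setIntegral_gt_le {Z : β → ℝ} (hZm : Measurable Z)
    (hZ : Integrable Z ν) {ε : ℝ} (hε : 0 < ε) : ∃ c : ℝ, ∫ p in {p | c < Z p}, Z p ∂ν ≤ ε := by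
  have htail := tendsto_setIntegral_of_antitone (μ := ν) (f := Z)
    (s := fun c : ℕ => {p | (c : ℝ) < Z p}) (fun c => measurableSet_lt measurable_const hZm)
    (fun c c' hcc' p (hp : (c' : ℝ) < Z p) => show (c : ℝ) < Z p from
      lt_of_le_of_lt (Nat.cast_le.2 hcc') hp) ⟨0, hZ.integrableOn⟩
  have hempty : ⋂ c : ℕ, {p | (c : ℝ) < Z p} = ∅ :=
    Set.eq_empty_of_forall_notMem fun p hp =>
      (show (⌈Z p⌉₊ : ℝ) < Z p from Set.mem_iInter.1 hp ⌈Z p⌉₊).not_ge (Nat.le_ceil _)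
  rw [hempty, setIntegral_empty] at htail
  obtain ⟨c, hc⟩ := (htail.eventually (ge_mem_nhds hε)).exists
  exact ⟨c, hc⟩

theorem exists_bounded_centered_approx [IsProbabilityMeasure ν] {h : α → β → ℝ} {Z : β → ℝ}
    (hh : Measurable (uncurry h)) (hZm : Measurable Z) (hZ : Integrable Z ν)
    (hhZ : ∀ x p, |h x p| ≤ Z p) (hh0 : ∀ x, ∫ p, h x p ∂ν = 0) {ε : ℝ} (hε : 0 < ε) :
    ∃ (d : α → β → ℝ) (C : ℝ) (r : β → ℝ), Measurable (uncurry d) ∧ (∀ x p, |d x p| ≤ C) ∧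
      (∀ x, ∫ p, d x p ∂ν = 0) ∧ Measurable r ∧ Integrable r ν ∧ ∫ p, r p ∂ν ≤ ε ∧
      ∀ x p, |h x p - d x p| ≤ r p := by
  obtain ⟨c, hc⟩ := hZ.exists_setIntegral_gt_le hZm (half_pos hε)
  set S := {p | Z p ≤ c}
  have hS : MeasurableSet S := measurableSet_le hZm measurable_const
  have hSc : Sᶜ = {p | c < Z p} := by ext; simp [S]
  have hint : ∀ x, Integrable (h x) ν := fun x =>
    hZ.mono' (hh.comp measurable_prodMk_left).aestronglyMeasurable (ae_of_all _ (hhZ x))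
  have htrunc : Measurable (uncurry fun x => S.indicator (h x)) := by
    simp only [uncurry_def, Set.indicator_apply]
    exact Measurable.ite (hS.preimage measurable_snd) hh measurable_const
  set g : α → ℝ := fun x => ∫ p, S.indicator (h x) p ∂ν
  have hg_meas : Measurable g := htrunc.stronglyMeasurable.integral_prod_right.measurable
  have hg : ∀ x, |g x| ≤ ε / 2 := fun x => by
    have hgx : g x = -∫ p in Sᶜ, h x p ∂ν := by
      rw [← add_neg_cancel_right (g x) (∫ p in Sᶜ, h x p ∂ν)]
      simp only [g]
      rw [integral_indicator hS, integral_add_compl hS (hint x), hh0 x, zero_add]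
    rw [hgx, abs_neg]
    calc |∫ p in Sᶜ, h x p ∂ν| ≤ ∫ p in Sᶜ, |h x p| ∂ν := abs_integral_le_integral_abs
      _ ≤ ∫ p in Sᶜ, Z p ∂ν :=
          setIntegral_mono (hint x).abs.integrableOn hZ.integrableOn (hhZ x)
      _ ≤ ε / 2 := hSc ▸ hc
  refine ⟨fun x p => S.indicator (h x) p - g x, |c| + ε / 2, fun p => Sᶜ.indicator Z p + ε / 2,
    htrunc.sub (hg_meas.comp measurable_fst), fun x p => ?_, fun x => ?_,
    (hZm.indicator hS.compl).add_const _, (hZ.indicator hS.compl).add (integrable_const _), ?_,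
    fun x p => ?_⟩
  · refine (abs_sub _ _).trans (add_le_add ?_ (hg x))
    by_cases hp : p ∈ S
    · rw [Set.indicator_of_mem hp]
      exact ((hhZ x p).trans hp).trans (le_abs_self c)
    · simp [Set.indicator_of_notMem hp]
  · rw [integral_sub ((hint x).indicator hS) (integrable_const _)]
    simp [g]
  · rw [integral_add (hZ.indicator hS.compl) (integrable_const _), integral_indicator hS.compl,
      hSc]
    simp only [integral_const, probReal_univ, smul_eq_mul, one_mul]
    linarith
  · rw [← Set.indicator_self_add_compl_apply S (h x) p, add_sub_sub_cancel]
    refine (abs_add_le _ _).trans (add_le_add ?_ (hg x))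
    by_cases hp : p ∈ Sᶜ
    · simp [Set.indicator_of_mem hp, hhZ x p]
    · simp [Set.indicator_of_notMem hp]

end Truncation

section Independence

variable {Ω β γ : Type*} [MeasurableSpace Ω] [MeasurableSpace β] [MeasurableSpace γ]
  {μ : Measure Ω}

theorem ProbabilityTheory.IndepFun.integral_comp_eq_zero [IsFiniteMeasure μ] {T : Ω → γ}
    {U : Ω → β} (hTU : IndepFun T U μ) (hT : Measurable T) (hU : Measurable U)
    {H : γ → β → ℝ} (hH : Measurable (uncurry H)) {C : ℝ} (hHC : ∀ t p, |H t p| ≤ C)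
    (hH0 : ∀ t, ∫ p, H t p ∂(μ.map U) = 0) :
    ∫ ω, H (T ω) (U ω) ∂μ = 0 := by
  calc ∫ ω, H (T ω) (U ω) ∂μ = ∫ q, uncurry H q ∂(μ.map fun ω => (T ω, U ω)) :=
        (integral_map (hT.prodMk hU).aemeasurable hH.aestronglyMeasurable).symm
    _ = ∫ q, uncurry H q ∂((μ.map T).prod (μ.map U)) := by
        rw [(indepFun_iff_map_prod_eq_prod_map_map hT.aemeasurable hU.aemeasurable).1 hTU]
    _ = ∫ t, ∫ p, H t p ∂(μ.map U) ∂(μ.map T) :=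
        integral_prod _ (.of_bound hH.aestronglyMeasurable C (ae_of_all _ fun q => hHC q.1 q.2))
    _ = 0 := by simp [hH0]

end Independence

section SigmaUpTo

variable {Ω β : Type*} [MeasurableSpace β] {P : ℕ → Ω → β}

abbrev sigmaUpTo (P : ℕ → Ω → β) (k : ℕ) : MeasurableSpace Ω :=
  ⨆ i ≤ k, MeasurableSpace.comap (P i) ‹MeasurableSpace β›

lemma sigmaUpTo_mono : Monotone (sigmaUpTo P) := fun _ _ hjk =>
  biSup_mono fun _ hi => hi.trans hjk

lemma measurable_sigmaUpTo {i k : ℕ} (hik : i ≤ k) : Measurable[sigmaUpTo P k] (P i) :=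
  Measurable.of_comap_le (le_iSup₂ (f := fun i _ => MeasurableSpace.comap (P i) _) i hik)

variable [MeasurableSpace Ω] {μ : Measure Ω}

lemma sigmaUpTo_le (hPm : ∀ i, Measurable (P i)) (k : ℕ) : sigmaUpTo P k ≤ ‹MeasurableSpace Ω› :=
  iSup₂_le fun i _ => (hPm i).comap_le

theorem ProbabilityTheory.iIndepFun.indepFun_succ_of_measurable_sigmaUpTo (hP : iIndepFun P μ)
    (hPm : ∀ i, Measurable (P i)) {γ : Type*} [MeasurableSpace γ] {k : ℕ} {T : Ω → γ}
    (hT : Measurable[sigmaUpTo P k] T) : IndepFun T (P (k + 1)) μ := by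
  have hindep := indep_iSup_of_disjoint (fun i => (hPm i).comap_le)
    ((iIndepFun_iff_iIndep _ _ _).1 hP) (S := Set.Iic k) (T := {k + 1}) (by simp)
  simp only [Set.mem_Iic, Set.mem_singleton_iff, iSup_iSup_eq_left] at hindep
  exact (IndepFun_iff_Indep _ _ _).2 (indep_of_indep_of_le_left hindep hT.comap_le)

end SigmaUpTo

section MartingaleDifferences

variable {Ω α β : Type*} [MeasurableSpace Ω] [MeasurableSpace α] [MeasurableSpace β]
  {μ : Measure Ω} {P : ℕ → Ω → β}

theorem integral_mul_eq_zero_of_centered [IsFiniteMeasure μ] (hP : iIndepFun P μ)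
    (hPm : ∀ i, Measurable (P i)) {ν : Measure β} (hlaw : ∀ k, μ.map (P k) = ν)
    {X : ℕ → Ω → α} (hX : ∀ k, Measurable[sigmaUpTo P k] (X k)) {d : α → β → ℝ}
    (hd : Measurable (uncurry d)) {C : ℝ} (hdC : ∀ x p, |d x p| ≤ C)
    (hd0 : ∀ x, ∫ p, d x p ∂ν = 0) {j k : ℕ} (hjk : j < k) :
    ∫ ω, d (X j ω) (P (j + 1) ω) * d (X k ω) (P (k + 1) ω) ∂μ = 0 := by
  have hT : Measurable[sigmaUpTo P k] fun ω => ((X j ω, P (j + 1) ω), X k ω) :=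
    (((hX j).mono (sigmaUpTo_mono hjk.le) le_rfl).prodMk (measurable_sigmaUpTo hjk)).prodMk (hX k)
  refine (hP.indepFun_succ_of_measurable_sigmaUpTo hPm hT).integral_comp_eq_zero
    (hT.mono (sigmaUpTo_le hPm k) le_rfl) (hPm _) (H := fun t p => d t.1.1 t.1.2 * d t.2 p)
    (C := C * C) ?_ (fun t p => ?_) (fun t => ?_)
  · exact (hd.comp (measurable_fst.comp measurable_fst)).mul
      (hd.comp ((measurable_snd.comp measurable_fst).prodMk measurable_snd))
  · rw [abs_mul]
    exact mul_le_mul (hdC _ _) (hdC _ _) (abs_nonneg _) ((abs_nonneg _).trans (hdC t.2 p))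
  · rw [hlaw, integral_const_mul, hd0, mul_zero]

theorem tendstoInMeasure_avg_zero_of_centered [IsProbabilityMeasure μ] (hP : iIndepFun P μ)
    (hPm : ∀ i, Measurable (P i)) (hident : ∀ k, IdentDistrib (P k) (P 0) μ μ)
    {X : ℕ → Ω → α} (hX : ∀ k, Measurable[sigmaUpTo P k] (X k)) {h : α → β → ℝ}
    (hh : Measurable (uncurry h)) {Z : β → ℝ} (hZm : Measurable Z)
    (hZ : Integrable (fun ω => Z (P 0 ω)) μ) (hhZ : ∀ x p, |h x p| ≤ Z p)
    (hh0 : ∀ x, ∫ ω, h x (P 0 ω) ∂μ = 0) :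
    TendstoInMeasure μ
      (fun (n : ℕ) ω => 1 / (n : ℝ) * ∑ k ∈ range n, h (X k ω) (P (k + 1) ω)) atTop 0 := by
  set ν := μ.map (P 0)
  have : IsProbabilityMeasure ν := Measure.isProbabilityMeasure_map (hPm 0).aemeasurable
  have hlaw : ∀ k, μ.map (P k) = ν := fun k => (hident k).map_eq
  have hZν : Integrable Z ν :=
    (integrable_map_measure hZm.aestronglyMeasurable (hPm 0).aemeasurable).2 hZ
  have hh0ν : ∀ x, ∫ p, h x p ∂ν = 0 := fun x =>
    (integral_map (hPm 0).aemeasurable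
      (hh.comp measurable_prodMk_left : Measurable (h x)).aestronglyMeasurable).trans (hh0 x)
  have hXm : ∀ k, Measurable (X k) := fun k => (hX k).mono (sigmaUpTo_le hPm k) le_rfl
  refine tendstoInMeasure_avg_zero_of_forall_approx fun ε hε => ?_
  obtain ⟨d, C, r, hd, hdC, hd0, hrm, hr, hrε, hhd⟩ :=
    exists_bounded_centered_approx hh hZm hZν hhZ hh0ν hε
  have hr_int : ∀ k, Integrable (fun ω => r (P k ω)) μ := fun k =>
    Integrable.comp_measurable (by rwa [hlaw]) (hPm k)
  have hr_le : ∀ k, ∫ ω, r (P k ω) ∂μ ≤ ε := fun k => by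
    rwa [← integral_map (hPm k).aemeasurable hrm.aestronglyMeasurable, hlaw]
  have hV_meas : ∀ k, Measurable fun ω => h (X k ω) (P (k + 1) ω) - d (X k ω) (P (k + 1) ω) :=
    fun k => (hh.comp ((hXm k).prodMk (hPm _))).sub (hd.comp ((hXm k).prodMk (hPm _)))
  refine ⟨fun k ω => d (X k ω) (P (k + 1) ω),
    fun k ω => h (X k ω) (P (k + 1) ω) - d (X k ω) (P (k + 1) ω), C,
    fun k => by ext ω; simp, fun k => hd.comp ((hXm k).prodMk (hPm _)), fun k ω => hdC _ _,
    fun j k hjk => integral_mul_eq_zero_of_centered hP hPm hlaw hX hd hdC hd0 hjk,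
    fun k => (hr_int _).mono' (hV_meas k).aestronglyMeasurable (ae_of_all _ fun ω => hhd _ _),
    fun k => (integral_mono ?_ (hr_int _) fun ω => hhd _ _).trans (hr_le _)⟩
  exact ((hr_int _).mono' (hV_meas k).aestronglyMeasurable (ae_of_all _ fun ω => hhd _ _)).abs

end MartingaleDifferences

section RandomCoefficientAutoregression

lemma abs_sq_div_sub_one_le {a s : ℝ} (ha : 0 < a) (hs : 0 < s) (x u v : ℝ) :
    |(x * u + v) ^ 2 / (a * x ^ 2 + s) - 1| ≤ 1 + 2 * u ^ 2 / a + 2 * v ^ 2 / s := by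
  have hden : 0 < a * x ^ 2 + s := by positivity
  have hratio : (x * u + v) ^ 2 / (a * x ^ 2 + s) ≤ 2 * u ^ 2 / a + 2 * v ^ 2 / s := by
    rw [div_le_iff₀ hden]
    have hcross : 0 ≤ 2 * u ^ 2 * s / a + 2 * v ^ 2 * a * x ^ 2 / s := by positivity
    have hexpand : (2 * u ^ 2 / a + 2 * v ^ 2 / s) * (a * x ^ 2 + s)
        = 2 * x ^ 2 * u ^ 2 + 2 * v ^ 2 + (2 * u ^ 2 * s / a + 2 * v ^ 2 * a * x ^ 2 / s) := by
      field_simp; ring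
    nlinarith [sq_nonneg (x * u - v)]
  have : 0 ≤ (x * u + v) ^ 2 / (a * x ^ 2 + s) := by positivity
  rw [abs_le]; constructor <;> linarith

lemma measurable_sigmaUpTo_of_recursion {Ω : Type*} {b e X : ℕ → Ω → ℝ} {φ x0 : ℝ}
    (hX0 : ∀ ω, X 0 ω = x0)
    (hrec : ∀ k : ℕ, 1 ≤ k → ∀ ω, X k ω = (φ + b k ω) * X (k - 1) ω + e k ω) (k : ℕ) :
    Measurable[sigmaUpTo (fun i ω => (b i ω, e i ω)) k] (X k) := by
  induction k with
  | zero => rw [funext hX0]; exact measurable_const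
  | succ k ih =>
    have hP := measurable_sigmaUpTo (P := fun i ω => (b i ω, e i ω)) (le_refl (k + 1))
    rw [funext (hrec (k + 1) k.succ_pos)]
    exact (hP.fst.const_add φ |>.mul (ih.mono (sigmaUpTo_mono k.le_succ) le_rfl)).add hP.snd

variable {Ω : Type*} [MeasurableSpace Ω] {μ : Measure Ω} [IsProbabilityMeasure μ]

lemma integral_sq_div_sub_one_eq_zero {u v : Ω → ℝ} {a s : ℝ}
    (hu : Integrable (fun ω => u ω ^ 2) μ) (hv : Integrable (fun ω => v ω ^ 2) μ)
    (huv : Integrable (fun ω => u ω * v ω) μ) (hu2 : ∫ ω, u ω ^ 2 ∂μ = a)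
    (hv2 : ∫ ω, v ω ^ 2 ∂μ = s) (huv0 : ∫ ω, u ω * v ω ∂μ = 0) {x : ℝ}
    (hx : a * x ^ 2 + s ≠ 0) :
    ∫ ω, ((x * u ω + v ω) ^ 2 / (a * x ^ 2 + s) - 1) ∂μ = 0 := by
  have hexpand : ∀ ω, (x * u ω + v ω) ^ 2 = x ^ 2 * u ω ^ 2 + 2 * x * (u ω * v ω) + v ω ^ 2 :=
    fun ω => by ring
  have hint : Integrable (fun ω => (x * u ω + v ω) ^ 2) μ := by
    simp_rw [hexpand]
    exact ((hu.const_mul _).add (huv.const_mul _)).add hv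
  have hsecond : ∫ ω, (x * u ω + v ω) ^ 2 ∂μ = a * x ^ 2 + s := by
    have hfirst : Integrable (fun ω => x ^ 2 * u ω ^ 2 + 2 * x * (u ω * v ω)) μ :=
      (hu.const_mul _).add (huv.const_mul _)
    simp_rw [hexpand]
    rw [integral_add hfirst hv,
      integral_add (hu.const_mul _) (huv.const_mul _), integral_const_mul, integral_const_mul,
      hu2, hv2, huv0]
    ring
  rw [integral_sub (hint.div_const _) (integrable_const 1), integral_div, hsecond, div_self hx]
  simp

end RandomCoefficientAutoregression

theorem stmt_18_general {Ω : Type*} [MeasurableSpace Ω] (μ : Measure Ω) [IsProbabilityMeasure μ]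
    (φ x0 ω2 σ2 : ℝ) (b e : ℕ → Ω → ℝ) (X : ℕ → Ω → ℝ)
    (hbmeas : ∀ i, Measurable (b i)) (hemeas : ∀ i, Measurable (e i))
    (hindep : iIndepFun
      (fun i ω => (b i ω, e i ω)) μ)
    (hident : ∀ i, IdentDistrib (fun ω => (b i ω, e i ω)) (fun ω => (b 0 ω, e 0 ω)) μ μ)
    (hb2int : Integrable (fun ω => (b 0 ω)^2) μ)
    (he2int : Integrable (fun ω => (e 0 ω)^2) μ)
    (hbeint : Integrable (fun ω => b 0 ω * e 0 ω) μ)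
    (hb2 : ∫ ω, (b 0 ω)^2 ∂μ = ω2) (hω2 : 0 < ω2)
    (he2 : ∫ ω, (e 0 ω)^2 ∂μ = σ2) (hσ2 : 0 < σ2)
    (hcov : ∫ ω, b 0 ω * e 0 ω ∂μ = 0)
    (hX0 : ∀ ω, X 0 ω = x0)
    (hrec : ∀ k : ℕ, 1 ≤ k → ∀ ω, X k ω = (φ + b k ω) * X (k - 1) ω + e k ω) :
    ∀ δ : ℝ, 0 < δ →
      Tendsto (fun n : ℕ =>
        μ {ω | δ ≤ |(1 / (n : ℝ)) * ∑ k ∈ Finset.Icc 1 n,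
          ((X (k - 1) ω * b k ω + e k ω)^2 / (ω2 * (X (k - 1) ω)^2 + σ2) - 1)|})
        atTop (nhds 0) := by
  intro δ hδ
  have hZ : Integrable (fun ω => 1 + 2 * b 0 ω ^ 2 / ω2 + 2 * e 0 ω ^ 2 / σ2) μ :=
    ((integrable_const 1).add ((hb2int.const_mul 2).div_const ω2)).add
      ((he2int.const_mul 2).div_const σ2)
  have hlln := tendstoInMeasure_avg_zero_of_centered hindep
    (fun i => (hbmeas i).prodMk (hemeas i)) hident (measurable_sigmaUpTo_of_recursion hX0 hrec)
    (h := fun x p => (x * p.1 + p.2) ^ 2 / (ω2 * x ^ 2 + σ2) - 1) (by fun_prop)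
    (Z := fun p => 1 + 2 * p.1 ^ 2 / ω2 + 2 * p.2 ^ 2 / σ2) (by fun_prop) hZ
    (fun x p => abs_sq_div_sub_one_le hω2 hσ2 x p.1 p.2)
    (fun x => integral_sq_div_sub_one_eq_zero hb2int he2int hbeint hb2 he2 hcov
      (by positivity))
  convert tendstoInMeasure_iff_norm.1 hlln δ hδ using 5 with n ω
  rw [Pi.zero_apply, sub_zero, Real.norm_eq_abs, ← Finset.sum_Icc_one_eq_sum_range
    (fun j k => (X j ω * b k ω + e k ω) ^ 2 / (ω2 * X j ω ^ 2 + σ2) - 1)]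

theorem stmt_18 {Ω : Type*} [MeasurableSpace Ω] (μ : Measure Ω) [IsProbabilityMeasure μ]
    (φ x0 ω2 σ2 : ℝ) (b e : ℕ → Ω → ℝ) (X : ℕ → Ω → ℝ)
    (hbmeas : ∀ i, Measurable (b i)) (hemeas : ∀ i, Measurable (e i))
    (hindep : iIndepFun
      (fun i ω => (b i ω, e i ω)) μ)
    (hident : ∀ i, IdentDistrib (fun ω => (b i ω, e i ω)) (fun ω => (b 0 ω, e 0 ω)) μ μ)
    (hbint : Integrable (b 0) μ) (hb2int : Integrable (fun ω => (b 0 ω)^2) μ)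
    (heint : Integrable (e 0) μ) (he2int : Integrable (fun ω => (e 0 ω)^2) μ)
    (hbeint : Integrable (fun ω => b 0 ω * e 0 ω) μ)
    (hbmean : ∫ ω, b 0 ω ∂μ = 0) (hb2 : ∫ ω, (b 0 ω)^2 ∂μ = ω2) (hω2 : 0 < ω2)
    (hemean : ∫ ω, e 0 ω ∂μ = 0) (he2 : ∫ ω, (e 0 ω)^2 ∂μ = σ2) (hσ2 : 0 < σ2)
    (hcov : ∫ ω, b 0 ω * e 0 ω ∂μ = 0)
    (hlogint : Integrable (fun ω => Real.log |φ + b 0 ω|) μ)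
    (hlog : 0 ≤ ∫ ω, Real.log |φ + b 0 ω| ∂μ)
    (hX0 : ∀ ω, X 0 ω = x0)
    (hrec : ∀ k : ℕ, 1 ≤ k → ∀ ω, X k ω = (φ + b k ω) * X (k - 1) ω + e k ω)
    (hXindep : ∀ k : ℕ, 1 ≤ k →
      IndepFun (fun ω => (b k ω, e k ω)) (X (k - 1)) μ) :
    ∀ δ : ℝ, 0 < δ →
      Tendsto (fun n : ℕ =>
        μ {ω | δ ≤ |(1 / (n : ℝ)) * ∑ k ∈ Finset.Icc 1 n,
          ((X (k - 1) ω * b k ω + e k ω)^2 / (ω2 * (X (k - 1) ω)^2 + σ2) - 1)|})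
        atTop (nhds 0) :=
  stmt_18_general μ φ x0 ω2 σ2 b e X hbmeas hemeas hindep hident hb2int he2int hbeint hb2 hω2 he2
    hσ2 hcov hX0 hrec
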